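/- arXiv:0709.2318 — 4 statements merged into one kernel-verified Lean document; each statement's English description precedes it below -/
import Mathlib

section
/- Let ℓ > 1 be odd, ζ a primitive ℓ-th root of unity in ℂ, b_j = (ζ^{2j+1} + ζ^{-2j-1})/(ζ - ζ^{-1}), and [m] = (ζ^m - ζ^{-m})/(ζ - ζ^{-1}). Define φ_j(x) = ∏_{0 ≤ i ≤ ℓ-1, b_i ≠ b_j} (x - b_i). Then for 0 ≤ j ≤ ℏ - 1 with ℏ = (ℓ-1)/2, one has φ_j(b_j) = ℓ² / ((ζ - ζ^{-1})^ℓ · [2j+1]²). -/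
/-!
Put `a = ζ^(2j+1)` and `c = ζ - ζ⁻¹`. As `ℓ` is odd, `i ↦ ζ^(2i+1)` maps `range ℓ` bijectively onto
the `ℓ`-th roots of unity, and `b_i = (x + x⁻¹)/c` for `x = ζ^(2i+1)`; moreover `b_i = b_j` exactly
when `x ∈ {a, a⁻¹}`. Since `(a + a⁻¹) - (x + x⁻¹) = -(a - x)(a⁻¹ - x)/x`, the product splits into
`∏ (a - x)`, `∏ (a⁻¹ - x)` and `∏ x = 1` over the roots `x ≠ a, a⁻¹`. The first two are read off
from `∏_{x ≠ u} (u - x) = ℓ u^(ℓ-1)`, the derivative of `X^ℓ - 1` at a root `u`.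
-/

/-- The roots `b_j = (ζ^{2j+1} + ζ^{-(2j+1)})/(ζ - ζ⁻¹)`. -/
noncomputable def casimirRoot (ζ : ℂ) (j : ℕ) : ℂ :=
  (ζ ^ (2 * (j : ℤ) + 1) + ζ ^ (-(2 * (j : ℤ) + 1))) / (ζ - ζ⁻¹)

/-- The quantum integer `[m] = (ζ^m - ζ^{-m})/(ζ - ζ⁻¹)`. -/
noncomputable def qInt (ζ : ℂ) (m : ℤ) : ℂ := (ζ ^ m - ζ ^ (-m)) / (ζ - ζ⁻¹)

open Finset Polynomial

section Field

variable {K : Type*} [Field K] {n : ℕ}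

theorem inv_mem_nthRootsFinset_one {a : K} (ha : a ∈ nthRootsFinset n (1 : K)) :
    a⁻¹ ∈ nthRootsFinset n (1 : K) := by
  rcases n.eq_zero_or_pos with rfl | hn
  · simp at ha
  · rw [Polynomial.mem_nthRootsFinset hn] at ha ⊢
    rw [inv_pow, ha, inv_one]

theorem add_inv_eq_add_inv_iff {a x : K} (ha : a ≠ 0) (hx : x ≠ 0) :
    x + x⁻¹ = a + a⁻¹ ↔ x = a ∨ x = a⁻¹ := by
  have key : x * (x + x⁻¹ - (a + a⁻¹)) = (x - a) * (x - a⁻¹) := by field_simp; ring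
  rw [← sub_eq_zero, ← mul_right_inj' hx, mul_zero, key, mul_eq_zero, sub_eq_zero, sub_eq_zero]

theorem filter_add_inv_ne_eq_erase_erase [DecidableEq K] (s : Finset K) (hs : 0 ∉ s) {a : K}
    (ha : a ≠ 0) : s.filter (fun x => x + x⁻¹ ≠ a + a⁻¹) = (s.erase a).erase a⁻¹ := by
  ext x
  by_cases hx : x = 0
  · simp [hx, hs]
  · simp only [mem_filter, mem_erase, ne_eq, add_inv_eq_add_inv_iff ha hx]
    tauto

end Field

namespace IsPrimitiveRoot

section IsDomain

variable {R : Type*} [CommRing R] [IsDomain R] {n : ℕ} {ζ : R}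

theorem pow_mem_nthRootsFinset (hζ : IsPrimitiveRoot ζ n) (hn : 0 < n) (k : ℕ) :
    ζ ^ k ∈ nthRootsFinset n (1 : R) := by
  rw [Polynomial.mem_nthRootsFinset hn, ← pow_mul, mul_comm, pow_mul, hζ.pow_eq_one, one_pow]

theorem prod_erase_sub_of_mem_nthRootsFinset [DecidableEq R] (hζ : IsPrimitiveRoot ζ n)
    (hn : 0 < n) {u : R} (hu : u ∈ nthRootsFinset n (1 : R)) :
    ∏ x ∈ (nthRootsFinset n (1 : R)).erase u, (u - x) = n * u ^ (n - 1) := by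
  have h := congrArg (fun p => eval u (derivative p)) (X_pow_sub_one_eq_prod hn hζ)
  simp only [derivative_sub, derivative_X_pow, derivative_one, sub_zero, eval_mul, eval_C,
    eval_pow, eval_X, prod_eq_multiset_prod, eval_multiset_prod_X_sub_C_derivative hu] at h
  rw [h, ← erase_val, ← prod_eq_multiset_prod]

theorem prod_nthRootsFinset (hζ : IsPrimitiveRoot ζ n) (hn : 0 < n) :
    ∏ x ∈ nthRootsFinset n (1 : R), x = (-1) ^ (n + 1) := by
  have h := congrArg (eval 0) (X_pow_sub_one_eq_prod hn hζ)
  simp only [eval_sub, eval_pow, eval_X, eval_one, zero_pow hn.ne', zero_sub, eval_prod, eval_C]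
    at h
  rw [prod_neg, hζ.card_nthRootsFinset] at h
  have hsq : ((-1 : R) ^ n) ^ 2 = 1 := by rw [← pow_mul, mul_comm, pow_mul, neg_one_sq, one_pow]
  linear_combination (-(-1 : R) ^ n) * h - (∏ x ∈ nthRootsFinset n (1 : R), x) * hsq

theorem injOn_pow_two_mul_add_one (hζ : IsPrimitiveRoot ζ n) (hodd : Odd n) :
    Set.InjOn (fun i => ζ ^ (2 * i + 1)) (range n) := by
  intro i hi i' hi' h
  have hζ0 : ζ ≠ 0 := hζ.ne_zero hodd.pos.ne'
  have h2 : (ζ ^ 2) ^ i = (ζ ^ 2) ^ i' := by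
    simpa [pow_succ, pow_mul, mul_left_inj' hζ0] using h
  exact (hζ.pow_of_coprime 2 (Nat.coprime_two_left.mpr hodd)).pow_inj
    (mem_range.mp hi) (mem_range.mp hi') h2

theorem image_pow_two_mul_add_one_range [DecidableEq R] (hζ : IsPrimitiveRoot ζ n) (hodd : Odd n) :
    (range n).image (fun i => ζ ^ (2 * i + 1)) = nthRootsFinset n (1 : R) := by
  refine eq_of_subset_of_card_le (fun x hx => ?_) ?_
  · obtain ⟨i, -, rfl⟩ := mem_image.mp hx
    exact hζ.pow_mem_nthRootsFinset hodd.pos _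
  · rw [card_image_of_injOn (hζ.injOn_pow_two_mul_add_one hodd), card_range,
      hζ.card_nthRootsFinset]

theorem prod_filter_range_pow_two_mul_add_one {M : Type*} [CommMonoid M]
    [DecidableEq R] (hζ : IsPrimitiveRoot ζ n) (hodd : Odd n) (p : R → Prop) [DecidablePred p]
    (f : R → M) :
    ∏ i ∈ (range n).filter (fun i => p (ζ ^ (2 * i + 1))), f (ζ ^ (2 * i + 1))
      = ∏ x ∈ (nthRootsFinset n (1 : R)).filter p, f x := by
  rw [← hζ.image_pow_two_mul_add_one_range hodd, filter_image,
    prod_image ((hζ.injOn_pow_two_mul_add_one hodd).mono (filter_subset _ _))]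

end IsDomain

section Field

variable {K : Type*} [Field K] {n : ℕ} {ζ : K}

theorem pow_ne_inv_pow (hζ : IsPrimitiveRoot ζ n) (hodd : Odd n) {k : ℕ} (hk : ¬n ∣ k) :
    ζ ^ k ≠ (ζ ^ k)⁻¹ := by
  intro h
  have hsq : ζ ^ (2 * k) = 1 := by
    rw [two_mul, pow_add]
    nth_rewrite 2 [h]
    exact mul_inv_cancel₀ (pow_ne_zero _ (hζ.ne_zero hodd.pos.ne'))
  exact hk ((Nat.coprime_two_right.mpr hodd).dvd_of_dvd_mul_left
    ((hζ.pow_eq_one_iff_dvd _).mp hsq))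

theorem card_erase_erase_inv_add_two [DecidableEq K] (hζ : IsPrimitiveRoot ζ n) {a : K}
    (ha : a ∈ nthRootsFinset n (1 : K)) (ha' : a ≠ a⁻¹) :
    #(((nthRootsFinset n (1 : K)).erase a).erase a⁻¹) + 2 = n := by
  rw [card_erase_of_mem (mem_erase.mpr ⟨ha'.symm, inv_mem_nthRootsFinset_one ha⟩),
    card_erase_of_mem ha, hζ.card_nthRootsFinset]
  have : 2 ≤ #(nthRootsFinset n (1 : K)) :=
    one_lt_card.mpr ⟨a, ha, a⁻¹, inv_mem_nthRootsFinset_one ha, ha'⟩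
  rw [hζ.card_nthRootsFinset] at this
  omega

theorem prod_erase_erase_sub [DecidableEq K] (hζ : IsPrimitiveRoot ζ n) (hn : 0 < n) {u v : K}
    (hu : u ∈ nthRootsFinset n (1 : K)) (hv : v ∈ nthRootsFinset n (1 : K)) (huv : u ≠ v) :
    ∏ x ∈ ((nthRootsFinset n (1 : K)).erase u).erase v, (u - x) = n * u ^ (n - 1) / (u - v) := by
  rw [eq_div_iff (sub_ne_zero.mpr huv), mul_comm,
    mul_prod_erase _ _ (mem_erase.mpr ⟨huv.symm, hv⟩),
    hζ.prod_erase_sub_of_mem_nthRootsFinset hn hu]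

theorem prod_erase_erase_inv [DecidableEq K] (hζ : IsPrimitiveRoot ζ n) (hodd : Odd n) {a : K}
    (ha : a ∈ nthRootsFinset n (1 : K)) (ha' : a ≠ a⁻¹) :
    ∏ x ∈ ((nthRootsFinset n (1 : K)).erase a).erase a⁻¹, x = 1 := by
  have h := hζ.prod_nthRootsFinset hodd.pos
  rw [← mul_prod_erase _ _ ha,
    ← mul_prod_erase _ _ (mem_erase.mpr ⟨ha'.symm, inv_mem_nthRootsFinset_one ha⟩),
    hodd.add_one.neg_one_pow, ← mul_assoc,
    mul_inv_cancel₀ (ne_zero_of_mem_nthRootsFinset one_ne_zero ha), one_mul] at h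
  exact h

theorem prod_erase_erase_inv_add_inv_sub_add_inv [DecidableEq K] (hζ : IsPrimitiveRoot ζ n)
    (hodd : Odd n) {a : K} (ha : a ∈ nthRootsFinset n (1 : K)) (ha' : a ≠ a⁻¹) :
    ∏ x ∈ ((nthRootsFinset n (1 : K)).erase a).erase a⁻¹, (a + a⁻¹ - (x + x⁻¹))
      = n ^ 2 / (a - a⁻¹) ^ 2 := by
  set S := ((nthRootsFinset n (1 : K)).erase a).erase a⁻¹
  have hn := hodd.pos
  have ha0 : a ≠ 0 := ne_zero_of_mem_nthRootsFinset one_ne_zero ha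
  have hainv := inv_mem_nthRootsFinset_one ha
  have hpow : a ^ (n - 1) = a⁻¹ := by
    rw [pow_sub₀ a ha0 hn, (Polynomial.mem_nthRootsFinset hn 1).mp ha, pow_one, one_mul]
  have hpow' : a⁻¹ ^ (n - 1) = a := by rw [inv_pow, hpow, inv_inv]
  have hfactor : ∀ x ∈ S, a + a⁻¹ - (x + x⁻¹) = -((a - x) * (a⁻¹ - x) / x) := by
    intro x hx
    have hx0 : x ≠ 0 :=
      ne_zero_of_mem_nthRootsFinset one_ne_zero (mem_of_mem_erase (mem_of_mem_erase hx))
    field_simp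
    ring
  have hA : ∏ x ∈ S, (a - x) = n * a⁻¹ / (a - a⁻¹) := by
    rw [hζ.prod_erase_erase_sub hn ha hainv ha', hpow]
  have hB : ∏ x ∈ S, (a⁻¹ - x) = n * a / (a⁻¹ - a) := by
    rw [show S = ((nthRootsFinset n (1 : K)).erase a⁻¹).erase a from erase_right_comm,
      hζ.prod_erase_erase_sub hn hainv ha ha'.symm, hpow']
  have hsign : (-1 : K) ^ #S = -1 := by
    have h := hodd.neg_one_pow (α := K)
    rwa [← hζ.card_erase_erase_inv_add_two ha ha', pow_add, neg_one_sq, mul_one] at h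
  rw [prod_congr rfl hfactor, prod_neg, prod_div_distrib, prod_mul_distrib, hA, hB,
    hζ.prod_erase_erase_inv hodd ha ha', div_one, hsign, ← neg_sub a a⁻¹]
  field_simp

end Field

end IsPrimitiveRoot

theorem casimirRoot_eq (ζ : ℂ) (i : ℕ) :
    casimirRoot ζ i = (ζ ^ (2 * i + 1) + (ζ ^ (2 * i + 1))⁻¹) / (ζ - ζ⁻¹) := by
  rw [casimirRoot, zpow_neg, ← zpow_natCast]
  push_cast
  rfl

theorem qInt_natCast (ζ : ℂ) (m : ℕ) : qInt ζ m = (ζ ^ m - (ζ ^ m)⁻¹) / (ζ - ζ⁻¹) := by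
  rw [qInt, zpow_neg, zpow_natCast]

open scoped Classical in
/-- for `0 ≤ j ≤ ℏ - 1`,
`φ_j(b_j) = ∏_{0 ≤ i ≤ ℓ-1, b_i ≠ b_j} (b_j - b_i) = ℓ² / ((ζ - ζ⁻¹)^ℓ · [2j+1]²)`. -/
theorem phi_eval_at_root (ℓ : ℕ) (hℓ : 1 < ℓ) (hodd : Odd ℓ) (ζ : ℂ)
    (hζ : IsPrimitiveRoot ζ ℓ) :
    ∀ j < (ℓ - 1) / 2,
      ∏ i ∈ (Finset.range ℓ).filter (fun i => casimirRoot ζ i ≠ casimirRoot ζ j),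
        (casimirRoot ζ j - casimirRoot ζ i)
      = (ℓ : ℂ) ^ 2 / ((ζ - ζ⁻¹) ^ ℓ * (qInt ζ (2 * j + 1)) ^ 2) := by
  intro j hj
  set a := ζ ^ (2 * j + 1)
  set c := ζ - ζ⁻¹
  set S := ((nthRootsFinset ℓ (1 : ℂ)).erase a).erase a⁻¹
  have hc : c ≠ 0 := sub_ne_zero.mpr (by
    simpa using hζ.pow_ne_inv_pow hodd (k := 1) (Nat.not_dvd_of_pos_of_lt one_pos hℓ))
  have ha : a ≠ a⁻¹ := hζ.pow_ne_inv_pow hodd (Nat.not_dvd_of_pos_of_lt (by omega) (by omega))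
  have ha_mem : a ∈ nthRootsFinset ℓ (1 : ℂ) := hζ.pow_mem_nthRootsFinset hodd.pos _
  have hq : qInt ζ (2 * j + 1) = (a - a⁻¹) / c := by
    rw [show (2 * (j : ℤ) + 1) = ((2 * j + 1 : ℕ) : ℤ) by push_cast; ring, qInt_natCast]
  have hcard := hζ.card_erase_erase_inv_add_two ha_mem ha
  have hfilter :
      (nthRootsFinset ℓ (1 : ℂ)).filter (fun x => (x + x⁻¹) / c ≠ (a + a⁻¹) / c) = S := by
    simp only [ne_eq, div_left_inj' hc]
    exact filter_add_inv_ne_eq_erase_erase _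
      (fun h => ne_zero_of_mem_nthRootsFinset one_ne_zero h rfl)
      (pow_ne_zero _ (hζ.ne_zero hodd.pos.ne'))
  calc _ = ∏ x ∈ S, ((a + a⁻¹) / c - (x + x⁻¹) / c) := by
        simp only [casimirRoot_eq]
        rw [← hfilter, ← hζ.prod_filter_range_pow_two_mul_add_one hodd]
    _ = (∏ x ∈ S, (a + a⁻¹ - (x + x⁻¹))) / c ^ #S := by
        simp only [← sub_div, prod_div_distrib, prod_const]
    _ = _ := by
        rw [hζ.prod_erase_erase_inv_add_inv_sub_add_inv hodd ha_mem ha,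
          show c ^ ℓ = c ^ #S * c ^ 2 by rw [← pow_add, hcard], hq]
        field_simp
end

section
/- Let A be a finite-dimensional Hopf algebra over a field k. Nonzero left integrals for the dual Hopf algebra A* exist and any two are scalar multiples of each other (the space of left integrals for A* is one-dimensional). -/
/-- `λ : A →ₗ[k] k` is a left integral for the dual Hopf algebra `A*`:
`(id ⊗ λ) ∘ Δ (x) = λ(x) • 1_A` for all `x ∈ A`. -/
def IsLeftIntegralOnDual (k : Type*) (A : Type*) [CommSemiring k] [Semiring A]
    [HopfAlgebra k A] (lam : A →ₗ[k] k) : Prop :=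
  ∀ x : A,
    (TensorProduct.rid k A) ((TensorProduct.map LinearMap.id lam) (Coalgebra.comul x))
      = lam x • (1 : A)

/-!
The dual `A*` (functionals under convolution) is a Hopf module over `A`. It is a right
`A`-comodule through its left regular module structure, `g * f = ∑ g(f₁) f₀`, i.e.
`ρ f = ∑ᵢ (eᵢ* * f) ⊗ eᵢ`, and a right `A`-module through `f ↼ h = f(· S h)`, which is
`leftHit k A (S h) f` below; the two are compatible: `g * (f ↼ h) = ∑ (g(· h₂) * f) ↼ h₁`.
The left integrals are exactly the coinvariants (`g * λ = g(1) λ`), and `P f = ∑ f₀ ↼ S f₁`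
projects onto them. As in the fundamental theorem of Hopf modules, `λ ⊗ h ↦ λ ↼ h` is an
isomorphism from (integrals) ⊗ `A` onto `A*`, with inverse `f ↦ ∑ᵢ P(eᵢ* * f) ⊗ eᵢ`.
Comparing dimensions, the integrals form a line.
-/

open Coalgebra TensorProduct WithConv

noncomputable section

namespace HopfAlgebra

section Antipode

variable {R A B : Type*} [CommSemiring R] [Semiring A] [HopfAlgebra R A] [Semiring B]
  [Algebra R B]

lemma toConv_comp_antipode_mul (f : A →ₐ[R] B) :
    toConv (f.toLinearMap ∘ₗ antipode R) * toConv f.toLinearMap = 1 := by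
  have := LinearMap.algHom_comp_convMul_distrib f (toConv (antipode R)) (toConv LinearMap.id)
  rw [LinearMap.antipode_mul_id] at this
  ext x
  simpa using congr($this.symm x)

local notation "ι₁" =>
  AlgHom.toLinearMap (Algebra.TensorProduct.includeLeft (R := R) (S := R) (A := A) (B := A))
local notation "ι₂" =>
  AlgHom.toLinearMap (Algebra.TensorProduct.includeRight (R := R) (A := A) (B := A))

lemma toConv_comul_eq_mul : toConv (comul (R := R) (A := A)) = toConv ι₁ * toConv ι₂ := by
  ext a
  rw [(ℛ R a).convMul_apply, ← (ℛ R a).eq]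
  simp

/-- `Δ = ι₁ * ι₂` in the convolution ring, so `Δ⁻¹ = ι₂⁻¹ * ι₁⁻¹ = (ι₂ ∘ S) * (ι₁ ∘ S)`. -/
lemma toConv_comul_comp_antipode :
    toConv (comul ∘ₗ antipode R (A := A)) =
      toConv (ι₂ ∘ₗ antipode R) * toConv (ι₁ ∘ₗ antipode R) := by
  symm
  apply left_inv_eq_right_inv _ LinearMap.comul_right_inv
  rw [toConv_comul_eq_mul, mul_assoc, ← mul_assoc (toConv (ι₁ ∘ₗ antipode R)),
    toConv_comp_antipode_mul, one_mul, toConv_comp_antipode_mul]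

lemma comul_antipode (a : A) :
    comul (antipode R a) =
      TensorProduct.map (antipode R) (antipode R) (TensorProduct.comm R A A (comul a)) := by
  have := congr($(toConv_comul_comp_antipode (R := R) (A := A)) a)
  rw [(ℛ R a).convMul_apply] at this
  rw [← (ℛ R a).eq]
  simpa using this

lemma sum_comul_antipode_mul_tmul_one {a : A} {ι : Type*} (r : Repr R a ι) :
    ∑ i ∈ r.index, comul (antipode R (r.left i)) * (r.right i ⊗ₜ[R] (1 : A)) =
      1 ⊗ₜ antipode R a := by
  have key : toConv (comul ∘ₗ antipode R (A := A)) * toConv ι₁ = toConv (ι₂ ∘ₗ antipode R) := by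
    rw [toConv_comul_comp_antipode, mul_assoc, toConv_comp_antipode_mul, mul_one]
  simpa [r.convMul_apply] using congr($key a)

end Antipode

section Hit

variable {k A : Type*} [CommSemiring k] [Semiring A]

local notation "A⋆" => WithConv (A →ₗ[k] k)

variable (k A) in
def leftHit [Algebra k A] : A →ₐ[k] Module.End k A⋆ :=
  AlgHom.ofLinearMap
    { toFun u := (WithConv.linearEquiv k _).symm.toLinearMap ∘ₗ
        LinearMap.lcomp k k (LinearMap.mulRight k u) ∘ₗ (WithConv.linearEquiv k _).toLinearMap
      map_add' u v := by ext; simp [mul_add]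
      map_smul' c u := by ext; simp }
    (by ext; simp) (fun u v => by ext; simp [mul_assoc])

@[simp] lemma leftHit_apply [Algebra k A] (u : A) (f : A⋆) (x : A) :
    leftHit k A u f x = f (x * u) := rfl

variable [Bialgebra k A]

variable (k A) in
def hitLmul (φ : A⋆) : A ⊗[k] A →ₗ[k] Module.End k A⋆ :=
  LinearMap.mul' k _ ∘ₗ map ((Algebra.lmul k A⋆).toLinearMap ∘ₗ LinearMap.applyₗ φ ∘ₗ
    (leftHit k A).toLinearMap) (leftHit k A).toLinearMap

@[simp] lemma hitLmul_tmul (φ : A⋆) (a b : A) :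
    hitLmul k A φ (a ⊗ₜ b) = Algebra.lmul k A⋆ (leftHit k A a φ) * leftHit k A b := rfl

lemma leftHit_mul_lmul (u : A) (φ : A⋆) :
    leftHit k A u * Algebra.lmul k A⋆ φ = hitLmul k A φ (comul u) := by
  ext ψ x
  rw [← (ℛ k u).eq, map_sum]
  simp only [Module.End.mul_apply, Algebra.coe_lmul_eq_mul, LinearMap.mul_apply', leftHit_apply,
    hitLmul_tmul, LinearMap.sum_apply, WithConv.ofConv_sum]
  rw [((ℛ k x).mul (ℛ k u)).convMul_apply, Coalgebra.Repr.mul_index, Finset.sum_product,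
    Finset.sum_comm]
  simp [(ℛ k x).convMul_apply]

lemma hitLmul_leftHit (v : A) (φ : A⋆) :
    hitLmul k A (leftHit k A v φ) = hitLmul k A φ ∘ₗ LinearMap.mulRight k (v ⊗ₜ 1) :=
  TensorProduct.ext' fun a b => by simp [map_mul]

end Hit

section DualBasis

variable {k A ι : Type*} [CommSemiring k] [AddCommMonoid A] [Module k A] [Coalgebra k A]
  [Fintype ι] (b : Module.Basis ι k A)

local notation "A⋆" => WithConv (A →ₗ[k] k)

lemma _root_.Module.Basis.sum_coord_mul_coord_smul_tmul (y : A) :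
    ∑ j, ∑ l, (toConv (b.coord j) * toConv (b.coord l)) y • (b j ⊗ₜ[k] b l) = comul y := by
  have key (t : A ⊗[k] A) :
      ∑ j, ∑ l, LinearMap.mul' k k (map (b.coord j) (b.coord l) t) • (b j ⊗ₜ[k] b l) = t := by
    induction t using TensorProduct.induction_on with
    | zero => simp
    | tmul u v =>
      simp only [TensorProduct.map_tmul, LinearMap.mul'_apply, Module.Basis.coord_apply,
        ← smul_tmul_smul, ← tmul_sum, ← sum_tmul, b.sum_repr]
    | add s t hs ht => simp only [map_add, add_smul, Finset.sum_add_distrib, hs, ht]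
  exact key (comul y)

lemma _root_.Module.Basis.sum_comul_coord {W : Type*} [AddCommMonoid W] [Module k W]
    (β : A ⊗[k] A →ₗ[k] A⋆ →ₗ[k] W) :
    ∑ i, β (comul (b i)) (toConv (b.coord i)) =
      ∑ j, ∑ l, β (b j ⊗ₜ b l) (toConv (b.coord j) * toConv (b.coord l)) := by
  have expand (ψ : A⋆) : ψ = ∑ i, ψ (b i) • toConv (b.coord i) := by
    simp_rw [← toConv_smul, ← toConv_sum, b.sum_dual_apply_smul_coord]
  simp_rw [← b.sum_coord_mul_coord_smul_tmul]
  conv_rhs => enter [2, j, 2, l]; rw [expand (toConv (b.coord j) * toConv (b.coord l))]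
  simp only [map_sum, map_smul, LinearMap.sum_apply, LinearMap.smul_apply]
  rw [Finset.sum_comm]
  exact Finset.sum_congr rfl fun i _ => Finset.sum_comm

end DualBasis

section HopfModule

variable {k A : Type*} [CommSemiring k] [Semiring A] [HopfAlgebra k A]

local notation "A⋆" => WithConv (A →ₗ[k] k)

variable (k A) in
def antipodeHitLmul (g : A⋆) : A ⊗[k] A →ₗ[k] Module.End k A⋆ :=
  LinearMap.mul' k _ ∘ₗ map ((leftHit k A).toLinearMap ∘ₗ antipode k)
    ((Algebra.lmul k A⋆).toLinearMap ∘ₗ LinearMap.applyₗ g ∘ₗ (leftHit k A).toLinearMap)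

@[simp] lemma antipodeHitLmul_tmul (g : A⋆) (a b : A) :
    antipodeHitLmul k A g (a ⊗ₜ b) =
      leftHit k A (antipode k a) * Algebra.lmul k A⋆ (leftHit k A b g) := rfl

lemma lmul_mul_leftHit_antipode (g : A⋆) (h : A) :
    Algebra.lmul k A⋆ g * leftHit k A (antipode k h) = antipodeHitLmul k A g (comul h) := by
  rw [← (ℛ k h).eq, map_sum]
  simp only [antipodeHitLmul_tmul, leftHit_mul_lmul, hitLmul_leftHit, LinearMap.comp_apply,
    LinearMap.mulRight_apply]
  rw [← map_sum, sum_comul_antipode_mul_tmul_one]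
  simp

variable {ι : Type*} [Fintype ι] (b : Module.Basis ι k A)

lemma sum_leftHit_antipode_mul_coord (g : A⋆) :
    ∑ j, leftHit k A (antipode k (b j)) g * toConv (b.coord j) = g 1 • 1 := by
  have expand (y z : A) : ∑ j, g (y * antipode k (b j)) * b.coord j z = g (y * antipode k z) := by
    simpa [mul_comm] using
      congr($(b.sum_dual_apply_smul_coord (g.ofConv ∘ₗ LinearMap.mulLeft k y ∘ₗ antipode k)) z)
  ext x
  simp only [ofConv_sum, LinearMap.sum_apply, (ℛ k x).convMul_apply, leftHit_apply]
  rw [Finset.sum_comm]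
  simp only [expand]
  rw [← map_sum, sum_mul_antipode_eq_smul (ℛ k x)]
  simp [mul_comm]

/-- `P f = ∑ᵢ (eᵢ* * f) ↼ S eᵢ`, written with `f ↼ h = S h ⇀ f`. -/
def integralProj : Module.End k A⋆ :=
  ∑ i, leftHit k A (antipode k (antipode k (b i))) * Algebra.lmul k A⋆ (toConv (b.coord i))

lemma lmul_mul_integralProj (g : A⋆) :
    Algebra.lmul k A⋆ g * integralProj b = g 1 • integralProj b := by
  let β : A ⊗[k] A →ₗ[k] A⋆ →ₗ[k] Module.End k A⋆ := (LinearMap.mul k _).compl₁₂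
    (antipodeHitLmul k A g ∘ₗ map (antipode k) (antipode k) ∘ₗ
      (TensorProduct.comm k A A).toLinearMap)
    (Algebra.lmul k A⋆).toLinearMap
  calc Algebra.lmul k A⋆ g * integralProj b
      = ∑ i, β (comul (b i)) (toConv (b.coord i)) := by
        simp only [integralProj, Finset.mul_sum, ← mul_assoc, lmul_mul_leftHit_antipode,
          comul_antipode]
        rfl
    _ = ∑ j, ∑ l, β (b j ⊗ₜ b l) (toConv (b.coord j) * toConv (b.coord l)) :=
        b.sum_comul_coord β
    _ = ∑ l, leftHit k A (antipode k (antipode k (b l))) *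
          Algebra.lmul k A⋆ (∑ j, leftHit k A (antipode k (b j)) g * toConv (b.coord j)) *
          Algebra.lmul k A⋆ (toConv (b.coord l)) := by
        rw [Finset.sum_comm]
        refine Finset.sum_congr rfl fun l _ => ?_
        simp only [β, LinearMap.compl₁₂_apply, LinearMap.mul_apply', LinearMap.comp_apply,
          AlgHom.toLinearMap_apply, TensorProduct.map_tmul, LinearEquiv.coe_coe,
          TensorProduct.comm_tmul, antipodeHitLmul_tmul, map_sum, map_mul, Finset.mul_sum,
          Finset.sum_mul, mul_assoc]
    _ = g 1 • integralProj b := by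
        simp only [sum_leftHit_antipode_mul_coord, map_smul, map_one, mul_one, smul_mul_assoc,
          mul_smul_comm, integralProj, Finset.smul_sum]

lemma sum_leftHit_antipode_mul_integralProj_mul_lmul :
    ∑ i, leftHit k A (antipode k (b i)) * integralProj b *
      Algebra.lmul k A⋆ (toConv (b.coord i)) = 1 := by
  let β : A ⊗[k] A →ₗ[k] A⋆ →ₗ[k] Module.End k A⋆ := (LinearMap.mul k _).compl₁₂
    ((leftHit k A).toLinearMap ∘ₗ antipode k ∘ₗ LinearMap.mul' k A ∘ₗ (antipode k).rTensor A)
    (Algebra.lmul k A⋆).toLinearMap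
  calc ∑ i, leftHit k A (antipode k (b i)) * integralProj b *
        Algebra.lmul k A⋆ (toConv (b.coord i))
      = ∑ j, ∑ i, β (b j ⊗ₜ b i) (toConv (b.coord j) * toConv (b.coord i)) := by
        rw [Finset.sum_comm]
        refine Finset.sum_congr rfl fun i _ => ?_
        simp only [β, integralProj, Finset.mul_sum, Finset.sum_mul, LinearMap.compl₁₂_apply,
          LinearMap.mul_apply', LinearMap.comp_apply, AlgHom.toLinearMap_apply,
          LinearMap.rTensor_tmul, LinearMap.mul'_apply, antipode_mul_antidistrib, map_mul,
          mul_assoc]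
    _ = ∑ i, β (comul (b i)) (toConv (b.coord i)) := (b.sum_comul_coord β).symm
    _ = Algebra.lmul k A⋆ (∑ i, counit (R := k) (b i) • toConv (b.coord i)) := by
        simp [β, mul_antipode_rTensor_comul_apply, Algebra.algebraMap_eq_smul_one, antipode_one]
    _ = 1 := by
        have : ∑ i, counit (R := k) (b i) • toConv (b.coord i) = (1 : A⋆) := by
          ext x
          simp
        rw [this, map_one]

variable (k A) in
def leftIntegrals : Submodule k A⋆ where
  carrier := {l | ∀ φ : A⋆, φ * l = φ 1 • l}
  add_mem' ha hb φ := by simp [mul_add, ha φ, hb φ]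
  zero_mem' φ := by simp
  smul_mem' c l h φ := by simp [mul_smul_comm, h φ, smul_comm c]

lemma isLeftIntegralOnDual_iff [Module.Projective k A] (f : A →ₗ[k] k) :
    IsLeftIntegralOnDual k A f ↔ toConv f ∈ leftIntegrals k A := by
  have conv_eq (φ : A⋆) (x : A) :
      (φ * toConv f) x = φ (TensorProduct.rid k A (map LinearMap.id f (comul x))) := by
    rw [(ℛ k x).convMul_apply, ← (ℛ k x).eq]
    simp [map_sum, mul_comm]
  refine ⟨fun H φ => ?_, fun H x => ?_⟩
  · ext x
    simp [conv_eq, H x, mul_comm]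
  · refine Module.eval_apply_injective k (LinearMap.ext fun φ => ?_)
    simpa [conv_eq, mul_comm] using congr($(H (toConv φ)) x)

lemma integralProj_mem (f : A⋆) : integralProj b f ∈ leftIntegrals k A := fun g => by
  simpa using congr($(lmul_mul_integralProj b g) f)

lemma mul_leftHit_antipode_of_mem {l : A⋆} (hl : l ∈ leftIntegrals k A) (φ : A⋆) {h : A}
    {κ : Type*} (r : Repr k h κ) :
    φ * leftHit k A (antipode k h) l =
      ∑ j ∈ r.index, φ (r.right j) • leftHit k A (antipode k (r.left j)) l := by
  have := congr($(lmul_mul_leftHit_antipode φ h) l)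
  rw [← r.eq, map_sum] at this
  simpa [hl _] using this

lemma integralProj_leftHit_antipode_of_mem {l : A⋆} (hl : l ∈ leftIntegrals k A) (h : A) :
    integralProj b (leftHit k A (antipode k h) l) = counit (R := k) h • l := by
  let r := ℛ k h
  calc integralProj b (leftHit k A (antipode k h) l)
      = ∑ j ∈ r.index, leftHit k A (antipode k (antipode k (∑ i, b.coord i (r.right j) • b i)))
          (leftHit k A (antipode k (r.left j)) l) := by
        simp only [integralProj, LinearMap.sum_apply, Module.End.mul_apply,
          Algebra.coe_lmul_eq_mul, LinearMap.mul_apply', mul_leftHit_antipode_of_mem hl _ r,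
          map_sum, map_smul, LinearMap.smul_apply]
        rw [Finset.sum_comm]
    _ = leftHit k A (antipode k (∑ j ∈ r.index, r.left j * antipode k (r.right j))) l := by
        simp [Module.Basis.coord_apply, b.sum_repr, antipode_mul_antidistrib, map_sum, map_mul]
    _ = counit (R := k) h • l := by
        simp [sum_mul_antipode_eq_smul r, antipode_one]

lemma integralProj_mul_leftHit_antipode_of_mem {l : A⋆} (hl : l ∈ leftIntegrals k A) (φ : A⋆)
    (h : A) : integralProj b (φ * leftHit k A (antipode k h) l) = φ h • l := by
  simp only [mul_leftHit_antipode_of_mem hl φ (ℛ k h), map_sum, map_smul,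
    integralProj_leftHit_antipode_of_mem b hl, smul_smul, ← Finset.sum_smul]
  congr 1
  conv_rhs => rw [← sum_counit_smul (ℛ k h)]
  simp [mul_comm]

def leftIntegralsTensorEquiv : leftIntegrals k A ⊗[k] A ≃ₗ[k] A⋆ :=
  LinearEquiv.ofLinearMap
    (lift (((leftHit k A).toLinearMap ∘ₗ antipode k).flip ∘ₗ (leftIntegrals k A).subtype))
    (∑ i, (TensorProduct.mk k _ A).flip (b i) ∘ₗ
      (integralProj b).codRestrict _ (integralProj_mem b) ∘ₗ
        Algebra.lmul k A⋆ (toConv (b.coord i)))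
    (LinearMap.ext fun f => by
      simpa using congr($(sum_leftHit_antipode_mul_integralProj_mul_lmul b) f))
    (TensorProduct.ext' fun l h => by
      have (i : ι) : (integralProj b).codRestrict _ (integralProj_mem b)
          (Algebra.lmul k A⋆ (toConv (b.coord i)) (leftHit k A (antipode k h) l)) =
            b.coord i h • l :=
        Subtype.ext (integralProj_mul_leftHit_antipode_of_mem b l.2 _ h)
      simp only [LinearMap.comp_apply, lift.tmul, LinearMap.sum_apply, LinearMap.flip_apply,
        Submodule.subtype_apply, LinearMap.id_apply, TensorProduct.mk_apply,
        AlgHom.toLinearMap_apply]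
      rw [Finset.sum_congr rfl fun i _ => congrArg (· ⊗ₜ[k] b i) (this i)]
      simp only [smul_tmul, ← tmul_sum, Module.Basis.coord_apply, b.sum_repr])

end HopfModule

open Module in
theorem finrank_leftIntegrals (k A : Type*) [Field k] [Ring A] [HopfAlgebra k A]
    [FiniteDimensional k A] : finrank k (leftIntegrals k A) = 1 := by
  -- instance search does not see through the `WithConv` synonym here
  have : Free k (leftIntegrals k A) := .of_basis (.ofVectorSpace k (leftIntegrals k A))
  have : Nontrivial A := Bialgebra.nontrivial k
  have h := (leftIntegralsTensorEquiv (finBasis k A)).finrank_eq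
  rw [finrank_tensorProduct, (WithConv.linearEquiv k _).finrank_eq, Subspace.dual_finrank_eq] at h
  exact (Nat.mul_eq_right finrank_pos.ne').1 h

end HopfAlgebra

end

open HopfAlgebra in
/-- for a finite-dimensional Hopf algebra `A` over a field `k`, nonzero left
integrals for `A*` exist, and any two are scalar multiples of each other (the space of
left integrals for `A*` is one-dimensional). -/
theorem left_integral_dual_exists_unique (k : Type*) (A : Type*) [Field k] [Ring A]
    [HopfAlgebra k A] [FiniteDimensional k A] :
    (∃ lam : A →ₗ[k] k, lam ≠ 0 ∧ IsLeftIntegralOnDual k A lam) ∧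
    (∀ lam₁ lam₂ : A →ₗ[k] k, IsLeftIntegralOnDual k A lam₁ →
      IsLeftIntegralOnDual k A lam₂ → lam₁ ≠ 0 → ∃ c : k, lam₂ = c • lam₁) := by
  have hI := finrank_leftIntegrals k A
  refine ⟨?_, fun l₁ l₂ h₁ h₂ hne => ?_⟩
  · have : Nontrivial (leftIntegrals k A) := Module.nontrivial_of_finrank_eq_succ hI
    obtain ⟨⟨l, hl⟩, hne⟩ := exists_ne (0 : leftIntegrals k A)
    exact ⟨ofConv l, fun h => hne (Subtype.ext congr(toConv $h)),
      (isLeftIntegralOnDual_iff _).2 hl⟩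
  · have hne' : (⟨toConv l₁, (isLeftIntegralOnDual_iff _).1 h₁⟩ : leftIntegrals k A) ≠ 0 :=
      fun h => hne congr(ofConv ($h).1)
    obtain ⟨c, hc⟩ := (finrank_eq_one_iff_of_nonzero' (K := k) (V := leftIntegrals k A) _ hne').1
      hI ⟨toConv l₂, (isLeftIntegralOnDual_iff _).1 h₂⟩
    exact ⟨c, congr(ofConv ($hc).1).symm⟩
end

section
/- Let ℓ > 1 be odd, ζ a primitive ℓ-th root of unity, and U_ζ the quantum group U_ζ(sl2). The element F^{ℓ-1}·π_1·E^{ℓ-1}, where π_1 = (1/ℓ)∑_{i=1}^{ℓ} ζ^{2i} K^i, is a two-sided integral for U_ζ: for all x ∈ U_ζ, x·(F^{ℓ-1}π_1E^{ℓ-1}) = ε(x)·F^{ℓ-1}π_1E^{ℓ-1} = (F^{ℓ-1}π_1E^{ℓ-1})·x. In particular U_ζ is unimodular. -/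
/-!
Put `q = ζ²` (a primitive `ℓ`-th root of unity since `ℓ` is odd) and `π = π₁ = ℓ⁻¹ ∑ (qK)ⁱ`.
As `(qK)^ℓ = 1`, `(qK)π = π`, i.e. `Kπ = q⁻¹π`; and `E(qK) = KE` turns `Eπ` into `(ℓ⁻¹ ∑ Kⁱ)E`,
so `v = πE^{ℓ-1}` is a highest weight vector: `Ev = 0`, `Kv = q⁻¹v`. The Verma module computation
`E F^{n+1} v = λ ∑_{j ≤ n} (q^{-j-1} - q^{j+1}) F^n v`, `λ = (ζ - ζ⁻¹)⁻¹`, vanishes for `n = ℓ - 2`,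
because `∑_{0<j<ℓ} qʲ = ∑_{0<j<ℓ} q⁻ʲ = -1`; hence `EΛ = 0`. Also `FΛ = 0` from `F^ℓ = 0`, and
`KΛ = q^{-ℓ}Λ = Λ`. The relations are preserved by the anti-automorphism fixing `K` and swapping
`E` and `F`, which fixes `Λ`; this gives the right-hand identities. They pass from the generators
to all of `U_ζ` because `ε` is multiplicative.
-/

open Finset MulOpposite

section Geometric

variable {M : Type*} [Ring M]

theorem sum_Icc_one_pow_eq_mul_geom_sum (x : M) (n : ℕ) :
    ∑ i ∈ Icc 1 n, x ^ i = x * ∑ i ∈ range n, x ^ i := by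
  rw [← Ico_add_one_right_eq_Icc, sum_Ico_eq_sum_range, mul_sum]
  simp only [add_tsub_cancel_right, add_comm 1, pow_succ']

theorem mul_sum_Icc_one_pow_of_pow_eq_one {x : M} {n : ℕ} (h : x ^ n = 1) :
    x * ∑ i ∈ Icc 1 n, x ^ i = ∑ i ∈ Icc 1 n, x ^ i := by
  have hfix : x * ∑ i ∈ range n, x ^ i = ∑ i ∈ range n, x ^ i := by
    have := mul_geom_sum x n
    rw [h, sub_self, sub_mul, one_mul, sub_eq_zero] at this
    exact this
  rw [sum_Icc_one_pow_eq_mul_geom_sum, hfix, hfix]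

end Geometric

theorem IsPrimitiveRoot.sum_range_pow_succ {R : Type*} [CommRing R] [IsDomain R] {x : R} {ℓ : ℕ}
    (hx : IsPrimitiveRoot x ℓ) (hℓ : 1 < ℓ) : ∑ j ∈ range (ℓ - 1), x ^ (j + 1) = -1 := by
  have h := hx.geom_sum_eq_zero hℓ
  rw [← Nat.sub_add_cancel hℓ.le, sum_range_succ'] at h
  simpa using eq_neg_of_add_eq_zero_left h

theorem IsPrimitiveRoot.sum_range_inv_pow_sub_inv_eq_zero {k : Type*} [Field k] {q : k} {ℓ : ℕ}
    (hq : IsPrimitiveRoot q ℓ) (hℓ : 1 < ℓ) :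
    ∑ j ∈ range (ℓ - 1), (q⁻¹ * q⁻¹ ^ j - (q⁻¹ * q⁻¹ ^ j)⁻¹) = 0 := by
  simp only [← pow_succ', sum_sub_distrib, hq.inv.sum_range_pow_succ hℓ, ← inv_pow, inv_inv,
    hq.sum_range_pow_succ hℓ, sub_self]

section CommSemiring

variable {R A : Type*} [CommSemiring R] [Semiring A] [Algebra R A]

def IsTwoSidedIntegral (ε : A →ₐ[R] R) (Λ : A) : Prop :=
  ∀ x, x * Λ = ε x • Λ ∧ Λ * x = ε x • Λ

theorem isTwoSidedIntegral_of_adjoin_eq_top {s : Set A} (hs : Algebra.adjoin R s = ⊤)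
    {ε : A →ₐ[R] R} {Λ : A} (h : ∀ y ∈ s, y * Λ = ε y • Λ ∧ Λ * y = ε y • Λ) :
    IsTwoSidedIntegral ε Λ := by
  intro x
  induction (hs ▸ Algebra.mem_top : x ∈ Algebra.adjoin R s) using Algebra.adjoin_induction with
  | mem y hy => exact h y hy
  | algebraMap r =>
    simp only [Algebra.algebraMap_eq_smul_one, smul_mul_assoc, one_mul, mul_smul_comm, mul_one,
      map_smul, map_one, smul_eq_mul, and_self]
  | add x y _ _ hx hy =>
    exact ⟨by rw [add_mul, hx.1, hy.1, map_add, add_smul],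
      by rw [mul_add, hx.2, hy.2, map_add, add_smul]⟩
  | mul x y _ _ hx hy =>
    exact ⟨by rw [mul_assoc, hy.1, mul_smul_comm, hx.1, smul_smul, map_mul, mul_comm],
      by rw [← mul_assoc, hx.2, smul_mul_assoc, hy.2, smul_smul, map_mul]⟩

theorem mul_pow_eq_smul_of_mul_eq_smul {a b : A} {c : R} (h : a * b = c • (b * a)) (n : ℕ) :
    a * b ^ n = c ^ n • (b ^ n * a) := by
  have hconj : SemiconjBy a b (c • b) := by rw [SemiconjBy, h, smul_mul_assoc]
  rw [(hconj.pow_right n).eq, smul_pow, smul_mul_assoc]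

end CommSemiring

section Field

variable {k A : Type*} [Field k] [Ring A] [Algebra k A]

theorem inv_mul_eq_inv_smul_of_mul_eq_smul {K Kinv w : A} {ν : k} (hKinv : Kinv * K = 1)
    (hKw : K * w = ν • w) : Kinv * w = ν⁻¹ • w := by
  have hw : w = ν • (Kinv * w) := by rw [← mul_smul_comm, ← hKw, ← mul_assoc, hKinv, one_mul]
  rcases eq_or_ne ν 0 with rfl | hν
  · rw [zero_smul] at hw
    rw [hw, mul_zero, smul_zero]
  · conv_rhs => rw [hw]
    rw [smul_smul, inv_mul_cancel₀ hν, one_smul]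

theorem mul_pow_mul_eq_smul_of_highest_weight {q lam ν : k} {K Kinv E F v : A}
    (hKinv : Kinv * K = 1) (hKF : K * F = q⁻¹ • (F * K))
    (hEF : E * F - F * E = lam • (K - Kinv)) (hEv : E * v = 0) (hKv : K * v = ν • v) (n : ℕ) :
    E * (F ^ (n + 1) * v) =
      (lam * ∑ j ∈ range (n + 1), (ν * q⁻¹ ^ j - (ν * q⁻¹ ^ j)⁻¹)) • (F ^ n * v) := by
  have hweight (m : ℕ) : K * (F ^ m * v) = (ν * q⁻¹ ^ m) • (F ^ m * v) := by
    rw [← mul_assoc, mul_pow_eq_smul_of_mul_eq_smul hKF, smul_mul_assoc, mul_assoc, hKv,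
      mul_smul_comm, smul_smul, mul_comm]
  have hstep (m : ℕ) : E * (F ^ (m + 1) * v) = F * (E * (F ^ m * v)) +
      (lam * (ν * q⁻¹ ^ m - (ν * q⁻¹ ^ m)⁻¹)) • (F ^ m * v) := by
    have hEF' : E * F = F * E + lam • (K - Kinv) := by rw [← hEF]; abel
    rw [pow_succ', mul_assoc, ← mul_assoc E, hEF', add_mul, mul_assoc, smul_mul_assoc, sub_mul,
      hweight, inv_mul_eq_inv_smul_of_mul_eq_smul hKinv (hweight m), ← sub_smul, smul_smul]
  induction n with
  | zero =>
    rw [hstep, pow_zero, one_mul, hEv, mul_zero, zero_add, sum_range_one, pow_zero, mul_one]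
  | succ n ih =>
    rw [hstep, ih, mul_smul_comm, ← mul_assoc, ← pow_succ', ← add_smul, sum_range_succ _ (n + 1),
      mul_add]

def weightProjector (ℓ : ℕ) (q : k) (K : A) : A :=
  (ℓ : k)⁻¹ • ∑ i ∈ Icc 1 ℓ, (q • K) ^ i

def sl2Integral (ℓ : ℕ) (q : k) (K E F : A) : A :=
  F ^ (ℓ - 1) * weightProjector ℓ q K * E ^ (ℓ - 1)

theorem op_weightProjector (ℓ : ℕ) (q : k) (K : A) :
    op (weightProjector ℓ q K) = weightProjector ℓ q (op K) := by
  simp only [weightProjector, op_smul, Finset.op_sum, op_pow]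

theorem op_sl2Integral (ℓ : ℕ) (q : k) (K E F : A) :
    op (sl2Integral ℓ q K E F) = sl2Integral ℓ q (op K) (op F) (op E) := by
  simp only [sl2Integral, op_mul, op_pow, op_weightProjector, mul_assoc]

structure QuantumSl2Relations (ℓ : ℕ) (q lam : k) (K Kinv E F : A) : Prop where
  mul_inv : K * Kinv = 1
  inv_mul : Kinv * K = 1
  K_pow : K ^ ℓ = 1
  E_pow : E ^ ℓ = 0
  F_pow : F ^ ℓ = 0
  K_mul_E : K * E = q • (E * K)
  K_mul_F : K * F = q⁻¹ • (F * K)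
  E_mul_F_sub : E * F - F * E = lam • (K - Kinv)

namespace QuantumSl2Relations

variable {ℓ : ℕ} {q lam : k} {K Kinv E F : A}

theorem E_mul_K (h : QuantumSl2Relations ℓ q lam K Kinv E F) (hq : q ≠ 0) :
    E * K = q⁻¹ • (K * E) := by
  rw [h.K_mul_E, smul_smul, inv_mul_cancel₀ hq, one_smul]

theorem F_mul_K (h : QuantumSl2Relations ℓ q lam K Kinv E F) (hq : q ≠ 0) :
    F * K = q • (K * F) := by
  rw [h.K_mul_F, smul_smul, mul_inv_cancel₀ hq, one_smul]

theorem op (h : QuantumSl2Relations ℓ q lam K Kinv E F) (hq : q ≠ 0) :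
    QuantumSl2Relations ℓ q lam (op K) (op Kinv) (op F) (op E) where
  mul_inv := by rw [← op_mul, h.inv_mul, op_one]
  inv_mul := by rw [← op_mul, h.mul_inv, op_one]
  K_pow := by rw [← op_pow, h.K_pow, op_one]
  E_pow := by rw [← op_pow, h.F_pow, op_zero]
  F_pow := by rw [← op_pow, h.E_pow, op_zero]
  K_mul_E := by rw [← op_mul, ← op_mul, h.F_mul_K hq, op_smul]
  K_mul_F := by rw [← op_mul, ← op_mul, h.E_mul_K hq, op_smul]
  E_mul_F_sub := by rw [← op_mul, ← op_mul, ← op_sub, h.E_mul_F_sub, op_smul, op_sub]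

theorem K_mul_weightProjector (h : QuantumSl2Relations ℓ q lam K Kinv E F)
    (hq : IsPrimitiveRoot q ℓ) (hℓ : 0 < ℓ) :
    K * weightProjector ℓ q K = q⁻¹ • weightProjector ℓ q K := by
  have hq0 : q ≠ 0 := hq.ne_zero hℓ.ne'
  have hqK : (q • K) ^ ℓ = 1 := by rw [smul_pow, hq.pow_eq_one, h.K_pow, one_smul]
  have hK (x : A) : K * x = q⁻¹ • (q • K * x) := by
    rw [smul_mul_assoc, smul_smul, inv_mul_cancel₀ hq0, one_smul]
  rw [weightProjector, mul_smul_comm, hK, mul_sum_Icc_one_pow_of_pow_eq_one hqK, smul_comm]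

theorem E_mul_weightProjector_mul_pow_eq_zero (h : QuantumSl2Relations ℓ q lam K Kinv E F)
    (hq : q ≠ 0) (hℓ : 0 < ℓ) : E * weightProjector ℓ q K * E ^ (ℓ - 1) = 0 := by
  have hconj : SemiconjBy E (q • K) K := by
    rw [SemiconjBy, mul_smul_comm, h.E_mul_K hq, smul_smul, mul_inv_cancel₀ hq, one_smul]
  have hE : E * weightProjector ℓ q K = ((ℓ : k)⁻¹ • ∑ i ∈ Icc 1 ℓ, K ^ i) * E := by
    rw [weightProjector, mul_smul_comm, smul_mul_assoc, mul_sum, sum_mul]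
    exact congrArg _ (sum_congr rfl fun i _ => (hconj.pow_right i).eq)
  rw [hE, mul_assoc, ← pow_succ', Nat.sub_add_cancel hℓ, h.E_pow, mul_zero]

theorem K_mul_sl2Integral (h : QuantumSl2Relations ℓ q lam K Kinv E F)
    (hq : IsPrimitiveRoot q ℓ) (hℓ : 0 < ℓ) :
    K * sl2Integral ℓ q K E F = sl2Integral ℓ q K E F := by
  rw [sl2Integral, ← mul_assoc, ← mul_assoc, mul_pow_eq_smul_of_mul_eq_smul h.K_mul_F,
    smul_mul_assoc, smul_mul_assoc, mul_assoc (F ^ (ℓ - 1)), h.K_mul_weightProjector hq hℓ,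
    mul_smul_comm, smul_mul_assoc, smul_smul, ← pow_succ, Nat.sub_add_cancel hℓ, inv_pow,
    hq.pow_eq_one, inv_one, one_smul]

theorem E_mul_sl2Integral (h : QuantumSl2Relations ℓ q lam K Kinv E F)
    (hq : IsPrimitiveRoot q ℓ) (hℓ : 1 < ℓ) : E * sl2Integral ℓ q K E F = 0 := by
  have hℓ0 : 0 < ℓ := by omega
  set v := weightProjector ℓ q K * E ^ (ℓ - 1)
  have hEv : E * v = 0 := by
    rw [← mul_assoc, h.E_mul_weightProjector_mul_pow_eq_zero (hq.ne_zero hℓ0.ne') hℓ0]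
  have hKv : K * v = q⁻¹ • v := by
    rw [← mul_assoc, h.K_mul_weightProjector hq hℓ0, smul_mul_assoc]
  have hraise := mul_pow_mul_eq_smul_of_highest_weight h.inv_mul h.K_mul_F h.E_mul_F_sub hEv hKv
    (ℓ - 2)
  rw [show ℓ - 2 + 1 = ℓ - 1 by omega, hq.sum_range_inv_pow_sub_inv_eq_zero hℓ, mul_zero,
    zero_smul] at hraise
  rw [sl2Integral, mul_assoc, hraise]

theorem F_mul_sl2Integral (h : QuantumSl2Relations ℓ q lam K Kinv E F) (hℓ : 0 < ℓ) :
    F * sl2Integral ℓ q K E F = 0 := by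
  rw [sl2Integral, ← mul_assoc, ← mul_assoc, ← pow_succ', Nat.sub_add_cancel hℓ, h.F_pow,
    zero_mul, zero_mul]

theorem sl2Integral_mul_K (h : QuantumSl2Relations ℓ q lam K Kinv E F)
    (hq : IsPrimitiveRoot q ℓ) (hℓ : 0 < ℓ) :
    sl2Integral ℓ q K E F * K = sl2Integral ℓ q K E F :=
  op_injective <| by
    rw [op_mul, op_sl2Integral]
    exact (h.op (hq.ne_zero hℓ.ne')).K_mul_sl2Integral hq hℓ

theorem sl2Integral_mul_E (h : QuantumSl2Relations ℓ q lam K Kinv E F)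
    (hq : IsPrimitiveRoot q ℓ) (hℓ : 0 < ℓ) : sl2Integral ℓ q K E F * E = 0 :=
  op_injective <| by
    rw [op_mul, op_sl2Integral, op_zero]
    exact (h.op (hq.ne_zero hℓ.ne')).F_mul_sl2Integral hℓ

theorem sl2Integral_mul_F (h : QuantumSl2Relations ℓ q lam K Kinv E F)
    (hq : IsPrimitiveRoot q ℓ) (hℓ : 1 < ℓ) : sl2Integral ℓ q K E F * F = 0 :=
  op_injective <| by
    rw [op_mul, op_sl2Integral, op_zero]
    exact (h.op (hq.ne_zero (by omega))).E_mul_sl2Integral hq hℓ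

end QuantumSl2Relations

end Field

/-- in `U_ζ(sl2)` at a primitive `ℓ`-th root of unity `ζ` (`ℓ > 1` odd),
the element `F^{ℓ-1}·π₁·E^{ℓ-1}` with `π₁ = (1/ℓ)∑_{i=1}^{ℓ} ζ^{2i}K^i` is a two-sided
integral: `x·Λ = ε(x)·Λ = Λ·x` for all `x`. In particular `U_ζ` is unimodular. -/
theorem quantum_sl2_two_sided_integral (ℓ : ℕ) (hℓ : 1 < ℓ) (hodd : Odd ℓ) (ζ : ℂ)
    (hζ : IsPrimitiveRoot ζ ℓ)
    (A : Type*) [Ring A] [Algebra ℂ A] (K Kinv E F : A)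
    (hKinv : K * Kinv = 1 ∧ Kinv * K = 1)
    (hKl : K ^ ℓ = 1) (hEl : E ^ ℓ = 0) (hFl : F ^ ℓ = 0)
    (hKE : K * E = (ζ ^ 2 : ℂ) • (E * K))
    (hKF : K * F = (ζ⁻¹ ^ 2 : ℂ) • (F * K))
    (hEF : E * F - F * E = (ζ - ζ⁻¹)⁻¹ • (K - Kinv))
    (hgen : Algebra.adjoin ℂ ({K, E, F} : Set A) = ⊤)
    (ε : A →ₐ[ℂ] ℂ) (hεK : ε K = 1) (hεE : ε E = 0) (hεF : ε F = 0) :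
    ∀ x : A,
      x * (F ^ (ℓ - 1) * ((ℓ : ℂ)⁻¹ • ∑ i ∈ Finset.Icc 1 ℓ, (ζ ^ (2 * i) : ℂ) • K ^ i)
          * E ^ (ℓ - 1))
        = ε x • (F ^ (ℓ - 1) * ((ℓ : ℂ)⁻¹ • ∑ i ∈ Finset.Icc 1 ℓ, (ζ ^ (2 * i) : ℂ) • K ^ i)
          * E ^ (ℓ - 1)) ∧
      (F ^ (ℓ - 1) * ((ℓ : ℂ)⁻¹ • ∑ i ∈ Finset.Icc 1 ℓ, (ζ ^ (2 * i) : ℂ) • K ^ i)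
          * E ^ (ℓ - 1)) * x
        = ε x • (F ^ (ℓ - 1) * ((ℓ : ℂ)⁻¹ • ∑ i ∈ Finset.Icc 1 ℓ, (ζ ^ (2 * i) : ℂ) • K ^ i)
          * E ^ (ℓ - 1)) := by
  have hq : IsPrimitiveRoot (ζ ^ 2) ℓ := hζ.pow_of_coprime 2 (Nat.coprime_two_left.2 hodd)
  have hℓ0 : 0 < ℓ := by omega
  have h : QuantumSl2Relations ℓ (ζ ^ 2) (ζ - ζ⁻¹)⁻¹ K Kinv E F :=
    ⟨hKinv.1, hKinv.2, hKl, hEl, hFl, hKE, by rwa [← inv_pow], hEF⟩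
  have hΛ : F ^ (ℓ - 1) * ((ℓ : ℂ)⁻¹ • ∑ i ∈ Finset.Icc 1 ℓ, (ζ ^ (2 * i) : ℂ) • K ^ i)
      * E ^ (ℓ - 1) = sl2Integral ℓ (ζ ^ 2) K E F := by
    simp only [sl2Integral, weightProjector, smul_pow, pow_mul]
  rw [hΛ]
  refine isTwoSidedIntegral_of_adjoin_eq_top hgen ?_
  rintro y (rfl | rfl | rfl)
  · rw [hεK, one_smul]
    exact ⟨h.K_mul_sl2Integral hq hℓ0, h.sl2Integral_mul_K hq hℓ0⟩
  · rw [hεE, zero_smul]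
    exact ⟨h.E_mul_sl2Integral hq hℓ, h.sl2Integral_mul_E hq hℓ0⟩
  · rw [hεF, zero_smul]
    exact ⟨h.F_mul_sl2Integral hℓ0, h.sl2Integral_mul_F hq hℓ⟩
end

section
/- Gauss-sum nonvanishing: Let ℓ > 1 be odd, ζ a primitive ℓ-th root of unity, [m] = (ζ^m−ζ^{-m})/(ζ−ζ^{-1}). Then ∑_{i=0}^{(ℓ-3)/2} ζ^{2i(i+1)}[2i+1]² ≠ 0. -/
/-!
Let `ψ` be the additive character `a ↦ (ζ²)^a` of `ZMod ℓ`. Multiplied by `(ζ - ζ⁻¹)²`, the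
`i`-th summand becomes `ψ(i² + i) (ψ(2i + 1) - 2 + ψ(-(2i + 1)))`. This is invariant under
`i ↦ -1 - i` and vanishes at its fixed point `i = (ℓ - 1)/2`, so twice the sum is the sum over
all of `ZMod ℓ`; shifting `i` by `±1` evaluates that to `2 (ψ(-1) - 1) G` with
`G = ∑ ψ(a² + a)`. Finally `G ≠ 0`: substituting `a = b + t` in `G · ∑ ψ(-(b² + b))` leaves
`∑ₜ ψ(t² + t) ∑_b ψ(2bt)`, which is `ℓ` by orthogonality since `2` is invertible.
-/

open Finset

namespace AddChar

section QuadraticSums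

variable {R K : Type*} [CommRing R] [CommRing K]

def scaledSummand (ψ : AddChar R K) (a : R) : K :=
  ψ (a * a + a) * (ψ (2 * a + 1) - 2 + ψ (-(2 * a + 1)))

theorem scaledSummand_neg_one_sub (ψ : AddChar R K) (a : R) :
    scaledSummand ψ (-1 - a) = scaledSummand ψ a := by
  rw [scaledSummand, scaledSummand, show (-1 - a) * (-1 - a) + (-1 - a) = a * a + a by ring,
    show 2 * (-1 - a) + 1 = -(2 * a + 1) by ring, neg_neg]
  ring

theorem scaledSummand_eq_zero (ψ : AddChar R K) {a : R} (ha : 2 * a + 1 = 0) :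
    scaledSummand ψ a = 0 := by
  rw [scaledSummand, ha, neg_zero, map_zero_eq_one]
  ring

variable [Fintype R]

def quadGaussSum (ψ : AddChar R K) : K := ∑ a, ψ (a * a + a)

theorem sum_scaledSummand (ψ : AddChar R K) :
    ∑ a, scaledSummand ψ a = 2 * (ψ (-1) - 1) * quadGaussSum ψ := by
  have shift (s : R) (hs : s * s = 1) :
      ∑ a, ψ (a * a + a) * ψ (s * (2 * a + 1)) = ψ (-1) * quadGaussSum ψ := by
    rw [quadGaussSum, mul_sum, ← Equiv.sum_comp (Equiv.subRight s)]
    refine sum_congr rfl fun b _ => ?_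
    rw [← map_add_eq_mul, ← map_add_eq_mul, Equiv.subRight_apply]
    congr 1
    linear_combination (-1 : R) * hs
  have hplus := shift 1 (one_mul 1)
  have hminus := shift (-1) (by ring)
  simp only [one_mul, neg_one_mul] at hplus hminus
  simp only [scaledSummand, mul_add, mul_sub, sum_add_distrib, sum_sub_distrib, hplus, hminus,
    ← sum_mul, quadGaussSum]
  ring

theorem quadGaussSum_mul_sum_neg [IsDomain K] {ψ : AddChar R K} (hψ : ψ.IsPrimitive)
    (h2 : IsUnit (2 : R)) :
    quadGaussSum ψ * ∑ b, ψ (-(b * b + b)) = Fintype.card R := by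
  classical
  have inner (b : R) : ∑ a, ψ (a * a + a) * ψ (-(b * b + b))
      = ∑ t, ψ (t * t + t) * ψ (b * (2 * t)) := by
    rw [← Equiv.sum_comp (Equiv.addRight b)]
    refine sum_congr rfl fun t _ => ?_
    rw [← map_add_eq_mul, ← map_add_eq_mul]
    congr 1
    simp only [Equiv.coe_addRight]
    ring
  calc quadGaussSum ψ * ∑ b, ψ (-(b * b + b))
      = ∑ t, ψ (t * t + t) * ∑ b, ψ (b * (2 * t)) := by
        rw [quadGaussSum, sum_mul_sum, sum_comm]
        simp only [inner, mul_sum]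
        exact sum_comm
    _ = ∑ t, ψ (t * t + t) * if t = 0 then (Fintype.card R : K) else 0 := by
        refine sum_congr rfl fun t _ => ?_
        rw [sum_mulShift _ hψ, h2.mul_right_eq_zero, Nat.cast_ite, Nat.cast_zero]
    _ = Fintype.card R := by simp

theorem quadGaussSum_ne_zero [IsDomain K] {ψ : AddChar R K} (hψ : ψ.IsPrimitive)
    (h2 : IsUnit (2 : R)) (hR : (Fintype.card R : K) ≠ 0) : quadGaussSum ψ ≠ 0 :=
  left_ne_zero_of_mul ((quadGaussSum_mul_sum_neg hψ h2).trans_ne hR)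

end QuadraticSums

theorem zmodChar_intCast {K : Type*} [Field K] {n : ℕ} [NeZero n] {q : K}
    (hq : q ^ n = 1) (m : ℤ) : zmodChar n hq m = q ^ m := by
  rw [← zsmul_one, map_zsmul_eq_zpow, ← Nat.cast_one, zmodChar_apply', pow_one]

theorem zmodChar_neg_one {K : Type*} [Field K] {n : ℕ} [NeZero n] {q : K} (hq : q ^ n = 1) :
    zmodChar n hq (-1) = q⁻¹ := by
  simpa using zmodChar_intCast hq (-1)

end AddChar

theorem ZMod.sum_eq_two_nsmul_sum_range_add {M : Type*} [AddCommMonoid M] (n : ℕ)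
    {f : ZMod (2 * n + 1) → M} (hf : ∀ a, f (-1 - a) = f a) :
    ∑ a, f a = 2 • ∑ i ∈ range n, f i + f n := by
  have upper_half : ∑ i ∈ range n, f ((n + 1 + i : ℕ)) = ∑ i ∈ range n, f i := by
    rw [← sum_range_reflect]
    refine sum_congr rfl fun i hi => ?_
    have hi : i < n := mem_range.mp hi
    have hzero : ((n + 1 + (n - 1 - i) + i + 1 : ℕ) : ZMod (2 * n + 1)) = 0 := by
      rw [show n + 1 + (n - 1 - i) + i + 1 = 2 * n + 1 by omega, ZMod.natCast_self]
    push_cast at hzero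
    have hcast : ((n + 1 + (n - 1 - i) : ℕ) : ZMod (2 * n + 1)) = -1 - i := by
      push_cast
      linear_combination hzero
    rw [hcast, hf]
  calc ∑ a, f a = ∑ a : ZMod (2 * n + 1), f (a.val : ZMod (2 * n + 1)) := by
        simp only [ZMod.natCast_zmod_val]
    _ = ∑ i ∈ range (2 * n + 1), f i := Fin.sum_univ_eq_sum_range (fun i => f i) _
    _ = 2 • ∑ i ∈ range n, f i + f n := by
      rw [show range (2 * n + 1) = range (n + 1 + n) by rw [two_mul, add_right_comm],
        sum_range_add, sum_range_succ, upper_half, two_nsmul]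
      abel

theorem sub_inv_ne_zero {K : Type*} [Field K] {ζ : K} (h0 : ζ ≠ 0) (h : ζ ^ 2 ≠ 1) :
    ζ - ζ⁻¹ ≠ 0 := by
  rw [sub_ne_zero]
  intro heq
  apply h
  rw [sq]
  nth_rewrite 2 [heq]
  exact mul_inv_cancel₀ h0

theorem sub_inv_sq_mul_qInt_sq {ζ : ℂ} (hζ : ζ - ζ⁻¹ ≠ 0) (m : ℤ) :
    (ζ - ζ⁻¹) ^ 2 * qInt ζ m ^ 2 = (ζ ^ 2) ^ m - 2 + (ζ ^ 2) ^ (-m) := by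
  have hζ0 : ζ ≠ 0 := by rintro rfl; simp at hζ
  have sq_zpow (k : ℤ) : (ζ ^ 2) ^ k = (ζ ^ k) ^ 2 := by
    rw [← zpow_natCast ζ 2, ← zpow_mul, mul_comm, zpow_mul, zpow_natCast]
  have hζm : ζ ^ m ≠ 0 := zpow_ne_zero m hζ0
  rw [qInt, div_pow, mul_div_cancel₀ _ (pow_ne_zero 2 hζ), sq_zpow, sq_zpow, zpow_neg]
  field_simp
  ring

theorem sub_inv_sq_mul_summand_eq_scaledSummand {ζ : ℂ} (hζ : ζ - ζ⁻¹ ≠ 0) {ℓ : ℕ} [NeZero ℓ]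
    (hq : (ζ ^ 2) ^ ℓ = 1) (i : ℕ) :
    (ζ - ζ⁻¹) ^ 2 * (ζ ^ (2 * i * (i + 1)) * qInt ζ (2 * i + 1) ^ 2) =
      (AddChar.zmodChar ℓ hq).scaledSummand i := by
  have hpow : ζ ^ (2 * i * (i + 1)) = (ζ ^ 2) ^ (i * i + i) := by rw [← pow_mul]; ring_nf
  rw [mul_left_comm, sub_inv_sq_mul_qInt_sq hζ, AddChar.scaledSummand,
    ← AddChar.zmodChar_intCast hq, ← AddChar.zmodChar_intCast hq, hpow,
    ← AddChar.zmodChar_apply' hq]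
  push_cast
  ring

/-- Gauss-sum nonvanishing: for odd `ℓ > 1` and `ζ` a primitive `ℓ`-th
root of unity, `∑_{i=0}^{(ℓ-3)/2} ζ^{2i(i+1)}[2i+1]² ≠ 0`. -/
theorem gauss_sum_ne_zero (ℓ : ℕ) (hℓ : 1 < ℓ) (hodd : Odd ℓ) (ζ : ℂ)
    (hζ : IsPrimitiveRoot ζ ℓ) :
    ∑ i ∈ Finset.range ((ℓ - 3) / 2 + 1),
      ζ ^ (2 * i * (i + 1)) * (qInt ζ (2 * i + 1)) ^ 2 ≠ 0 := by
  obtain ⟨n, rfl⟩ := hodd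
  rw [show (2 * n + 1 - 3) / 2 + 1 = n by omega]
  have hq : IsPrimitiveRoot (ζ ^ 2) (2 * n + 1) :=
    hζ.pow_of_coprime 2 (Nat.coprime_two_left.mpr (odd_two_mul_add_one n))
  have hq1 : ζ ^ 2 ≠ 1 := hζ.pow_ne_one_of_pos_of_lt two_ne_zero (by omega)
  have hden : ζ - ζ⁻¹ ≠ 0 := sub_inv_ne_zero (hζ.ne_zero (by omega)) hq1
  have hhalf : 2 * (n : ZMod (2 * n + 1)) + 1 = 0 := by
    exact_mod_cast ZMod.natCast_self (2 * n + 1)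
  set ψ := AddChar.zmodChar (2 * n + 1) hq.pow_eq_one
  have hψ : ψ (-1) ≠ 1 := (AddChar.zmodChar_neg_one _).trans_ne (inv_ne_one.mpr hq1)
  have hG : ψ.quadGaussSum ≠ 0 :=
    AddChar.quadGaussSum_ne_zero (AddChar.zmodChar_primitive_of_primitive_root _ hq)
      (IsUnit.of_mul_eq_one (-n : ZMod (2 * n + 1)) (by linear_combination -hhalf))
      (by simpa using Nat.cast_add_one_ne_zero (R := ℂ) (2 * n))
  have key :
      (ζ - ζ⁻¹) ^ 2 * (2 * ∑ i ∈ range n, ζ ^ (2 * i * (i + 1)) * qInt ζ (2 * i + 1) ^ 2) =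
        2 * (ψ (-1) - 1) * ψ.quadGaussSum := by
    rw [← ψ.sum_scaledSummand, ZMod.sum_eq_two_nsmul_sum_range_add n ψ.scaledSummand_neg_one_sub,
      ψ.scaledSummand_eq_zero hhalf, add_zero, two_nsmul, two_mul, mul_add, mul_sum,
      sum_congr rfl fun i _ => sub_inv_sq_mul_summand_eq_scaledSummand hden hq.pow_eq_one i]
  intro hS
  rw [hS, mul_zero, mul_zero] at key
  exact mul_ne_zero (mul_ne_zero two_ne_zero (sub_ne_zero.mpr hψ)) hG key.symm
end
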